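/- Let X be a δ-hyperbolic geodesic metric space, let f ∈ Isom(X) be a hyperbolic isometry, let x ∈ X, and let τ ≥ 1 satisfy (1/τ)|m−n| ≤ d(f^m x, f^n x) ≤ τ|m−n| for all m,n ∈ ℤ. Set A = { f^n x : n ∈ ℤ } and, for z ∈ X, let π_z = { x' ∈ A : d(x',z) = inf_{a ∈ A} d(a,z) } denote the set of points of A nearest to z. Then there is a constant D ≥ 0, depending only on δ and τ, such that for every z ∈ X and every x_z ∈ π_z: d(x,z) ≥ d(x,x_z) + d(x_z,z) − D. -/

import Mathlib

open Filter Metric Set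

noncomputable section

universe u

variable {X : Type u} [MetricSpace X]

/-- The Gromov product `(x·y)_w = ½(d(x,w) + d(w,y) − d(x,y))`. -/
def gromovProduct (w x y : X) : ℝ := (dist x w + dist w y - dist x y) / 2

/-- `γ` is a geodesic from `x` to `y`, parametrized by arc length on `[0, dist x y]`. -/
structure IsGeodesicSegment (γ : ℝ → X) (x y : X) : Prop where
  source : γ 0 = x
  target : γ (dist x y) = y
  isom : ∀ ⦃s t : ℝ⦄, s ∈ Set.Icc (0 : ℝ) (dist x y) → t ∈ Set.Icc (0 : ℝ) (dist x y) →
    dist (γ s) (γ t) = |s - t|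

/-- A geodesic metric space is `δ`-hyperbolic: every pair of points is joined by a
geodesic, every geodesic triangle is `δ`-slim, every geodesic triangle has insize at
most `δ`, and the Gromov product is `δ`-hyperbolic. -/
structure IsDeltaHyperbolic (X : Type u) [MetricSpace X] (δ : ℝ) : Prop where
  delta_nonneg : 0 ≤ δ
  geodesic : ∀ x y : X, ∃ γ : ℝ → X, IsGeodesicSegment γ x y
  slim : ∀ (x y z : X) (α β γ : ℝ → X),
    IsGeodesicSegment α y z → IsGeodesicSegment β z x → IsGeodesicSegment γ x y →
    ∀ s ∈ Set.Icc (0 : ℝ) (dist y z),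
      (∃ t ∈ Set.Icc (0 : ℝ) (dist z x), dist (α s) (β t) ≤ δ) ∨
      (∃ t ∈ Set.Icc (0 : ℝ) (dist x y), dist (α s) (γ t) ≤ δ)
  insize : ∀ (x y z : X) (α β γ : ℝ → X),
    IsGeodesicSegment α y z → IsGeodesicSegment β z x → IsGeodesicSegment γ x y →
    dist (α (gromovProduct y x z)) (β (gromovProduct z x y)) ≤ δ ∧
    dist (β (gromovProduct z x y)) (γ (gromovProduct x y z)) ≤ δ ∧
    dist (γ (gromovProduct x y z)) (α (gromovProduct y x z)) ≤ δ
  gromov : ∀ w x y z : X,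
    min (gromovProduct w x y) (gromovProduct w y z) - δ ≤ gromovProduct w x z

/-- An isometry `f` of `X` is hyperbolic if for every `x ∈ X` there is `t > 0` with
`t|m − n| ≤ d(f^m x, f^n x)` for all integers `m, n`. -/
def IsHyperbolicIsometry (f : X ≃ᵢ X) : Prop :=
  ∀ x : X, ∃ t : ℝ, 0 < t ∧
    ∀ m n : ℤ, t * |(m : ℝ) - (n : ℝ)| ≤ dist ((f ^ m) x) ((f ^ n) x)

/-- A sequence converges to infinity if the Gromov products `(x_i·x_j)_w → ∞`. -/
def ConvergesToInfinity (w : X) (u : ℕ → X) : Prop :=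
  Tendsto (fun p : ℕ × ℕ => gromovProduct w (u p.1) (u p.2)) atTop atTop

/-- Two sequences are equivalent if the mixed Gromov products tend to infinity. -/
def SeqEquiv (w : X) (u v : ℕ → X) : Prop :=
  Tendsto (fun p : ℕ × ℕ => gromovProduct w (u p.1) (v p.2)) atTop atTop

/-- Sequences converging to infinity. -/
def BoundarySeq (w : X) : Type u := {u : ℕ → X // ConvergesToInfinity w u}

/-- The Gromov boundary `∂X`: equivalence classes of sequences converging to infinity. -/
def GromovBoundary (w : X) : Type u :=
  Quot (fun u v : BoundarySeq w => SeqEquiv w u.1 v.1)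

/-- The boundary point determined by a sequence converging to infinity. -/
def boundaryPt (w : X) (u : BoundarySeq w) : GromovBoundary w := Quot.mk _ u

/-- `X̄ = X ∪ ∂X`. -/
def GromovClosure (w : X) : Type u := X ⊕ GromovBoundary w

theorem gromovProduct_basepoint_ge (w w' x y : X) :
    gromovProduct w x y - dist w w' ≤ gromovProduct w' x y := by
  have h1 : |dist w' x - dist w x| ≤ dist w' w := abs_dist_sub_le w' w x
  have h2 : |dist w' y - dist w y| ≤ dist w' w := abs_dist_sub_le w' w y
  rw [abs_le] at h1 h2
  unfold gromovProduct
  rw [dist_comm x w', dist_comm x w, dist_comm w w']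
  linarith [h1.1, h1.2, h2.1, h2.2]

theorem gromovProduct_isometry (f : X ≃ᵢ X) (w x y : X) :
    gromovProduct w (f x) (f y) = gromovProduct (f.symm w) x y := by
  unfold gromovProduct
  conv_lhs => rw [show w = f (f.symm w) from (f.apply_symm_apply w).symm]
  rw [f.dist_eq, f.dist_eq, f.dist_eq]

theorem convergesToInfinity_isometry {w : X} (f : X ≃ᵢ X) {u : ℕ → X}
    (h : ConvergesToInfinity w u) :
    ConvergesToInfinity w (fun n => f (u n)) := by
  refine tendsto_atTop_mono (fun p => ?_)
    (tendsto_atTop_add_const_right atTop (-dist w (f.symm w)) h)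
  have h1 := gromovProduct_basepoint_ge w (f.symm w) (u p.1) (u p.2)
  have h2 := gromovProduct_isometry f w (u p.1) (u p.2)
  dsimp only
  linarith

theorem seqEquiv_isometry {w : X} (f : X ≃ᵢ X) {u v : ℕ → X}
    (h : SeqEquiv w u v) :
    SeqEquiv w (fun n => f (u n)) (fun n => f (v n)) := by
  refine tendsto_atTop_mono (fun p => ?_)
    (tendsto_atTop_add_const_right atTop (-dist w (f.symm w)) h)
  have h1 := gromovProduct_basepoint_ge w (f.symm w) (u p.1) (v p.2)
  have h2 := gromovProduct_isometry f w (u p.1) (v p.2)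
  dsimp only
  linarith

/-- The extension of an isometry of `X` to the Gromov boundary. -/
def boundaryMap (w : X) (f : X ≃ᵢ X) : GromovBoundary w → GromovBoundary w :=
  Quot.lift
    (fun u : BoundarySeq w =>
      boundaryPt w ⟨fun n => f (u.1 n), convergesToInfinity_isometry f u.2⟩)
    (fun _ _ h => Quot.sound (seqEquiv_isometry f h))

/-- The extension of an isometry of `X` to `X̄ = X ∪ ∂X`. -/
def closureMap (w : X) (f : X ≃ᵢ X) : GromovClosure w → GromovClosure w
  | Sum.inl x => Sum.inl (f x)
  | Sum.inr a => Sum.inr (boundaryMap w f a)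

/-- The Gromov product of a boundary point with a point of `X̄`, extended by
taking infima of liminfs over representative sequences. -/
noncomputable def boundaryGP (w : X) (a : GromovBoundary w) : GromovClosure w → ℝ
  | Sum.inl p => sInf {r : ℝ | ∃ u : BoundarySeq w, boundaryPt w u = a ∧
      r = Filter.liminf (fun n => gromovProduct w (u.1 n) p) atTop}
  | Sum.inr b => sInf {r : ℝ | ∃ u v : BoundarySeq w, boundaryPt w u = a ∧
      boundaryPt w v = b ∧
      r = Filter.liminf (fun n => gromovProduct w (u.1 n) (v.1 n)) atTop}

/-- The basis for the topology on `X̄`: open balls in `X`, and the sets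
`N(â,k) = {y : (â·y)_w > k}` for boundary points `â` and `k > 0`. -/
def closureBasis (w : X) : Set (Set (GromovClosure w)) :=
  {S | (∃ (x : X) (r : ℝ), 0 < r ∧ S = Sum.inl '' Metric.ball x r) ∨
       (∃ (a : GromovBoundary w) (k : ℝ), 0 < k ∧ S = {y | k < boundaryGP w a y})}

/-- The topology on `X̄` generated by the basis above. -/
def closureTop (w : X) : TopologicalSpace (GromovClosure w) :=
  TopologicalSpace.generateFrom (closureBasis w)

/-- `S ⊆ X̄` is a neighborhood of `p ∈ X̄`. -/
def IsNeighborhood (w : X) (S : Set (GromovClosure w)) (p : GromovClosure w) : Prop :=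
  S ∈ @nhds (GromovClosure w) (closureTop w) p

/-- `a ∈ ∂X` is the attracting fixed point of `f`: it is represented by the
sequence `(f^n x)` for a point `x ∈ X`. -/
def IsAttractingFixedPt (w : X) (f : X ≃ᵢ X) (a : GromovBoundary w) : Prop :=
  ∃ (x : X) (h : ConvergesToInfinity w (fun n : ℕ => (f ^ (n : ℤ)) x)),
    boundaryPt w ⟨fun n : ℕ => (f ^ (n : ℤ)) x, h⟩ = a

/-- `a ∈ ∂X` is the repelling fixed point of `f`: the attracting fixed point of `f⁻¹`. -/
def IsRepellingFixedPt (w : X) (f : X ≃ᵢ X) (a : GromovBoundary w) : Prop :=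
  IsAttractingFixedPt w f⁻¹ a

/-- The concatenation `α · (f α)` of a path `α` defined on `[0, L]` with its
image under `f`, parametrized on `[0, 2L]`. -/
noncomputable def concatPath (f : X ≃ᵢ X) (α : ℝ → X) (L : ℝ) : ℝ → X :=
  fun s => if s ≤ L then α s else f (α (s - L))

/-!
The orbit `k ↦ f^k x` is a `τ`-bi-Lipschitz chain, so by the Morse lemma every geodesic between
two orbit points stays within a constant `M(δ, τ)` of the orbit. The Morse lemma is proved as in
Bridson–Haefliger III.H.1.7: slimness of triangles, applied to a chain split at its midpoint,
puts every point of a geodesic `δ⌈log₂ n⌉`-close to an `n`-step chain; applied at a point of the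
geodesic farthest (at distance `D`) from the orbit, to a chain of length `O(τD)` that stays `D`
away from it, this gives `D ≤ O(δ log (τD)) + τ`.

Now let `q` be the internal point of the triangle `(x_z, x, z)` on `[x_z, x]`, so that
`d(x_z, q) = (x·z)_{x_z}` and `d(q, z) ≤ d(x_z, z) - (x·z)_{x_z} + δ`. An orbit point within `M`
of `q` is no closer to `z` than `x_z`, hence `(x·z)_{x_z} ≤ M + δ`.
-/

theorem gromovProduct_nonneg (w x y : X) : 0 ≤ gromovProduct w x y := by
  have := dist_triangle x w y
  unfold gromovProduct
  linarith

theorem gromovProduct_le_dist (w x y : X) : gromovProduct w x y ≤ dist w x := by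
  have := dist_triangle w x y
  unfold gromovProduct
  linarith [dist_comm x w]

namespace IsGeodesicSegment

variable {γ : ℝ → X} {x y : X} {t : ℝ}

theorem dist_source_apply (hγ : IsGeodesicSegment γ x y) (ht : t ∈ Icc 0 (dist x y)) :
    dist x (γ t) = t := by
  rw [← hγ.source, hγ.isom (left_mem_Icc.2 dist_nonneg) ht, zero_sub, abs_neg, abs_of_nonneg ht.1]

theorem dist_apply_target (hγ : IsGeodesicSegment γ x y) (ht : t ∈ Icc 0 (dist x y)) :
    dist (γ t) y = dist x y - t := by
  calc dist (γ t) y = dist (γ t) (γ (dist x y)) := by rw [hγ.target]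
    _ = dist x y - t := by
      rw [hγ.isom ht (right_mem_Icc.2 dist_nonneg), abs_sub_comm,
        abs_of_nonneg (by linarith [ht.2])]

theorem continuousOn (hγ : IsGeodesicSegment γ x y) : ContinuousOn γ (Icc 0 (dist x y)) :=
  (LipschitzOnWith.of_dist_le_mul (K := 1) fun s hs t ht => by
    rw [hγ.isom hs ht, NNReal.coe_one, one_mul, Real.dist_eq]).continuousOn

end IsGeodesicSegment

def LiesOnGeodesic (p x y : X) : Prop :=
  ∃ γ : ℝ → X, IsGeodesicSegment γ x y ∧ ∃ t ∈ Icc 0 (dist x y), γ t = p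

theorem IsGeodesicSegment.liesOnGeodesic {γ : ℝ → X} {x y : X} (hγ : IsGeodesicSegment γ x y)
    {t : ℝ} (ht : t ∈ Icc 0 (dist x y)) : LiesOnGeodesic (γ t) x y :=
  ⟨γ, hγ, t, ht, rfl⟩

theorem IsGeodesicSegment.liesOnGeodesic_of_le {γ : ℝ → X} {x y : X}
    (hγ : IsGeodesicSegment γ x y) {r s t : ℝ} (hr : 0 ≤ r) (hrs : r ≤ s) (hst : s ≤ t)
    (ht : t ≤ dist x y) : LiesOnGeodesic (γ s) (γ r) (γ t) := by
  have hmem : ∀ {u}, r ≤ u → u ≤ t → u ∈ Icc 0 (dist x y) := fun h₁ h₂ =>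
    ⟨hr.trans h₁, h₂.trans ht⟩
  have hdist : dist (γ r) (γ t) = t - r := by
    rw [hγ.isom (hmem le_rfl (hrs.trans hst)) (hmem (hrs.trans hst) le_rfl), abs_sub_comm,
      abs_of_nonneg (by linarith)]
  refine ⟨fun u => γ (r + u), ⟨by simp, by rw [hdist, add_sub_cancel], fun u v hu hv => ?_⟩,
    s - r, ?_, by simp⟩
  · rw [hdist] at hu hv
    rw [hγ.isom (hmem (by linarith [hu.1]) (by linarith [hu.2]))
      (hmem (by linarith [hv.1]) (by linarith [hv.2])), add_sub_add_left_eq_sub]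
  · rw [hdist]
    exact ⟨by linarith, by linarith⟩

namespace LiesOnGeodesic

variable {p x y : X}

theorem symm (h : LiesOnGeodesic p x y) : LiesOnGeodesic p y x := by
  obtain ⟨γ, hγ, t, ht, rfl⟩ := h
  have hrev : ∀ {u}, u ∈ Icc 0 (dist x y) → dist x y - u ∈ Icc 0 (dist x y) := fun hu =>
    ⟨by linarith [hu.2], by linarith [hu.1]⟩
  refine ⟨fun u => γ (dist x y - u), ⟨by simpa using hγ.target, ?_, fun u v hu hv => ?_⟩,
    dist x y - t, ?_, by simp⟩
  · simp [dist_comm y x, hγ.source]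
  · rw [dist_comm y x] at hu hv
    rw [hγ.isom (hrev hu) (hrev hv), sub_sub_sub_cancel_left, abs_sub_comm]
  · rw [dist_comm y x]
    exact hrev ht

theorem gromovProduct_eq_zero (h : LiesOnGeodesic p x y) : gromovProduct p x y = 0 := by
  obtain ⟨γ, hγ, t, ht, rfl⟩ := h
  unfold gromovProduct
  rw [hγ.dist_source_apply ht, hγ.dist_apply_target ht]
  ring

end LiesOnGeodesic

theorem Nat.clog_lt_logb_add_one {b n : ℕ} (hb : 1 < b) (hn : n ≠ 0) :
    (Nat.clog b n : ℝ) < Real.logb b n + 1 := by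
  rw [← Real.natCeil_logb_natCast]
  exact Nat.ceil_lt_add_one
    (Real.logb_nonneg (by exact_mod_cast hb) (by exact_mod_cast Nat.one_le_iff_ne_zero.2 hn))

theorem le_of_le_mul_log_add {a b c x : ℝ} (ha : 0 ≤ a) (hb : 0 ≤ b) (hx₀ : 0 ≤ x)
    (hx : x ≤ a * Real.log (b * x + 2) + c) : x ≤ 2 * (a * Real.log (2 * a * b + 2) + c) := by
  have hK : 0 < 2 * a * b + 2 := by positivity
  have hy : 0 < b * x + 2 := by positivity
  -- `log y ≤ y / K + log K - 1` with `K = 2ab + 2` absorbs half of `x`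
  have hlog := Real.log_le_sub_one_of_pos (div_pos hy hK)
  rw [Real.log_div hy.ne' hK.ne'] at hlog
  have hlin : a * ((b * x + 2) / (2 * a * b + 2)) ≤ x / 2 + a := by
    rw [mul_div_assoc', div_le_iff₀ hK]
    nlinarith [mul_nonneg (mul_nonneg ha ha) hb]
  nlinarith [mul_le_mul_of_nonneg_left hlog ha]

-- The bound on `D` given by `le_of_le_mul_log_add` from `D ≤ 2δ⌈log₂ (6τD + 2)⌉ + τ`,
-- the inequality of `IsDeltaHyperbolic.exists_le_clog_of_isMaxOn`.
def morseConstant (δ τ : ℝ) : ℝ :=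
  2 * (2 * δ / Real.log 2 * Real.log (24 * δ * τ / Real.log 2 + 2) + 2 * δ + τ)

theorem exists_dist_eq_infDist_image_Iic (c : ℕ → X) (n : ℕ) (y : X) :
    ∃ i ≤ n, dist y (c i) = infDist y (c '' Iic n) := by
  obtain ⟨_, ⟨i, hi, rfl⟩, h⟩ := ((finite_Iic n).image c).isCompact.exists_infDist_eq_dist
    ⟨c 0, mem_image_of_mem c (Nat.zero_le n)⟩ y
  exact ⟨i, hi, h.symm⟩

namespace IsDeltaHyperbolic

variable {δ τ : ℝ}

theorem exists_dist_le_liesOnGeodesic (hX : IsDeltaHyperbolic X δ) {p x y : X}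
    (hp : LiesOnGeodesic p x y) (z : X) :
    ∃ q, dist p q ≤ δ ∧ (LiesOnGeodesic q x z ∨ LiesOnGeodesic q z y) := by
  obtain ⟨α, hα, s, hs, rfl⟩ := hp
  obtain ⟨β, hβ⟩ := hX.geodesic y z
  obtain ⟨γ, hγ⟩ := hX.geodesic z x
  rcases hX.slim z x y α β γ hα hβ hγ s hs with ⟨t, ht, hst⟩ | ⟨t, ht, hst⟩
  · exact ⟨β t, hst, .inr (hβ.liesOnGeodesic ht).symm⟩
  · exact ⟨γ t, hst, .inl (hγ.liesOnGeodesic ht).symm⟩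

theorem exists_gromovProduct_le_clog (hX : IsDeltaHyperbolic X δ) {n : ℕ} :
    ∀ {c : ℕ → X} {p : X}, 1 ≤ n → LiesOnGeodesic p (c 0) (c n) →
      ∃ i < n, gromovProduct p (c i) (c (i + 1)) ≤ δ * Nat.clog 2 n := by
  induction n using Nat.strong_induction_on with
  | _ n ih =>
  intro c p hn hp
  obtain rfl | hn₂ : n = 1 ∨ 2 ≤ n := by omega
  · exact ⟨0, one_pos, by simp [hp.gromovProduct_eq_zero]⟩
  -- slimness of the triangle `c 0, c m, c n` moves `p` by at most `δ` onto a half chain,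
  -- whose `clog` is one less
  set m := (n + 1) / 2
  have hclog : Nat.clog 2 n = Nat.clog 2 m + 1 := Nat.clog_of_two_le one_lt_two hn₂
  obtain ⟨q, hpq, hq⟩ := hX.exists_dist_le_liesOnGeodesic hp (c m)
  have hmove : ∀ {a b : X} {k : ℕ}, Nat.clog 2 k ≤ Nat.clog 2 m →
      gromovProduct q a b ≤ δ * Nat.clog 2 k → gromovProduct p a b ≤ δ * Nat.clog 2 n := by
    intro a b k hk hqab
    have := gromovProduct_basepoint_ge p q a b
    have : δ * Nat.clog 2 k ≤ δ * Nat.clog 2 m := by gcongr; exact hX.delta_nonneg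
    rw [hclog]
    push_cast
    linarith
  rcases hq with hq | hq
  · obtain ⟨i, hi, hqi⟩ := ih m (by omega) (by omega) hq
    exact ⟨i, by omega, hmove le_rfl hqi⟩
  · have hmn : m + (n - m) = n := by omega
    obtain ⟨i, hi, hqi⟩ := ih (n - m) (by omega) (c := fun j => c (m + j)) (by omega)
      (by simpa [hmn] using hq)
    exact ⟨m + i, by omega, hmove (Nat.clog_mono_right 2 (by omega)) hqi⟩

theorem le_of_forall_le_dist_chain (hX : IsDeltaHyperbolic X δ) {p a b : X}
    (hp : LiesOnGeodesic p a b) {c : ℕ → X} {k : ℕ} {r s : ℝ}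
    (ha : dist a (c 0) ≤ s) (hb : dist (c k) b ≤ s) (hc : ∀ i < k, dist (c i) (c (i + 1)) ≤ s)
    (hpa : r ≤ dist p a) (hpb : r ≤ dist p b) (hpc : ∀ i ≤ k, r ≤ dist p (c i)) :
    2 * r ≤ 2 * δ * Nat.clog 2 (k + 2) + s := by
  -- the chain `a, c 0, …, c k, b`
  set e : ℕ → X := fun j => if j = 0 then a else if j = k + 2 then b else c (j - 1)
  have heN : e (k + 2) = b := by simp [e]
  obtain ⟨i, hi, hgp⟩ :=
    hX.exists_gromovProduct_le_clog (n := k + 2) (c := e) (by omega) (by rwa [heN])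
  have hfar : ∀ j ≤ k + 2, r ≤ dist p (e j) := by
    intro j hj
    simp only [e]
    split_ifs
    exacts [hpa, hpb, hpc _ (by omega)]
  have hstep : dist (e i) (e (i + 1)) ≤ s := by
    obtain rfl | hi₀ := Nat.eq_zero_or_pos i
    · simpa [e] using ha
    obtain rfl | hik := eq_or_ne i (k + 1)
    · simpa [e] using hb
    have := hc (i - 1) (by omega)
    rw [Nat.sub_add_cancel hi₀] at this
    have hik' : i ≠ k + 2 := by omega
    simpa [e, hi₀.ne', hik, hik'] using this
  unfold gromovProduct at hgp
  linarith [hfar i (by omega), hfar (i + 1) (by omega), dist_comm (e i) p]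

theorem exists_le_clog_of_chain_between (hX : IsDeltaHyperbolic X δ) (hτ : 0 ≤ τ)
    {c : ℕ → X} {n : ℕ} (hstep : ∀ i < n, dist (c i) (c (i + 1)) ≤ τ) {p a b : X}
    (hp : LiesOnGeodesic p a b) {i₁ i₂ : ℕ} (hi₁ : i₁ ≤ n) (hi₂ : i₂ ≤ n) {r : ℝ}
    (ha : dist a (c i₁) ≤ r) (hb : dist b (c i₂) ≤ r) (hpa : r ≤ dist p a) (hpb : r ≤ dist p b)
    (hpc : ∀ i ≤ n, r ≤ dist p (c i)) :
    ∃ k : ℕ, (k : ℝ) ≤ |(i₁ : ℝ) - i₂| ∧ r ≤ 2 * δ * Nat.clog 2 (k + 2) + τ := by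
  wlog h : i₁ ≤ i₂ generalizing a b i₁ i₂
  · obtain ⟨k, hk, hr⟩ := this hp.symm hi₂ hi₁ hb ha hpb hpa (le_of_not_ge h)
    exact ⟨k, by rwa [abs_sub_comm], hr⟩
  refine ⟨i₂ - i₁, ?_, ?_⟩
  · rw [Nat.cast_sub h, abs_sub_comm]
    exact le_abs_self _
  have hkey := hX.le_of_forall_le_dist_chain hp (c := fun j => c (i₁ + j)) (k := i₂ - i₁)
    (ha.trans (le_max_right τ r))
    (by rw [Nat.add_sub_cancel' h, dist_comm]; exact hb.trans (le_max_right τ r))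
    (fun i _ => (hstep _ (by omega)).trans (le_max_left τ r)) hpa hpb
    (fun i _ => hpc _ (by omega))
  have : 0 ≤ 2 * δ * Nat.clog 2 (i₂ - i₁ + 2) := by have := hX.delta_nonneg; positivity
  rcases le_total τ r with hτr | hτr
  · rw [max_eq_right hτr] at hkey; linarith
  · rw [max_eq_left hτr] at hkey; linarith

theorem exists_le_clog_of_isMaxOn (hX : IsDeltaHyperbolic X δ) (hτ : 0 ≤ τ) {c : ℕ → X}
    {n : ℕ} (hstep : ∀ i < n, dist (c i) (c (i + 1)) ≤ τ)
    (hlow : ∀ i ≤ n, ∀ j ≤ n, |(i : ℝ) - j| ≤ τ * dist (c i) (c j))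
    {γ : ℝ → X} (hγ : IsGeodesicSegment γ (c 0) (c n)) {t₀ : ℝ}
    (ht₀ : t₀ ∈ Icc 0 (dist (c 0) (c n)))
    (hmax : IsMaxOn (fun t => infDist (γ t) (c '' Iic n)) (Icc 0 (dist (c 0) (c n))) t₀) :
    ∃ k : ℕ, (k : ℝ) ≤ 6 * τ * infDist (γ t₀) (c '' Iic n) ∧
      infDist (γ t₀) (c '' Iic n) ≤ 2 * δ * Nat.clog 2 (k + 2) + τ := by
  set S := c '' Iic n
  set L := dist (c 0) (c n)
  set D := infDist (γ t₀) S
  have hS : ∀ y, ∀ i ≤ n, infDist y S ≤ dist y (c i) := fun y i hi =>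
    infDist_le_dist_of_mem (mem_image_of_mem c hi)
  have hD : 0 ≤ D := infDist_nonneg
  have hL : 0 ≤ L := dist_nonneg
  have hDt₀ : D ≤ t₀ := by
    have := hS (γ t₀) 0 (Nat.zero_le n)
    rwa [dist_comm, hγ.dist_source_apply ht₀] at this
  have hDL : D ≤ L - t₀ := by
    have := hS (γ t₀) n le_rfl
    rwa [hγ.dist_apply_target ht₀] at this
  -- The chain from `γ t₁` through the orbit points between those nearest to `γ t₁` and `γ t₂`,
  -- to `γ t₂`, has at most `6τD` inner steps and keeps distance `D` from `γ t₀`.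
  set t₁ := max 0 (t₀ - 2 * D)
  set t₂ := min L (t₀ + 2 * D)
  have ht₁ : t₁ ∈ Icc 0 L := ⟨le_max_left _ _, max_le hL (by linarith [ht₀.2])⟩
  have ht₂ : t₂ ∈ Icc 0 L := ⟨le_min hL (by linarith [ht₀.1]), min_le_left _ _⟩
  have ht₁₀ : t₁ ≤ t₀ := max_le ht₀.1 (by linarith)
  have ht₀₂ : t₀ ≤ t₂ := le_min ht₀.2 (by linarith)
  have hfar₁ : D ≤ dist (γ t₀) (γ t₁) := by
    have : t₁ ≤ t₀ - D := max_le (by linarith) (by linarith)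
    rw [hγ.isom ht₀ ht₁, abs_of_nonneg (by linarith)]
    linarith
  have hfar₂ : D ≤ dist (γ t₀) (γ t₂) := by
    have : t₀ + D ≤ t₂ := le_min (by linarith) (by linarith)
    rw [hγ.isom ht₀ ht₂, abs_sub_comm, abs_of_nonneg (by linarith)]
    linarith
  obtain ⟨i₁, hi₁, hγi₁⟩ := exists_dist_eq_infDist_image_Iic c n (γ t₁)
  obtain ⟨i₂, hi₂, hγi₂⟩ := exists_dist_eq_infDist_image_Iic c n (γ t₂)
  have hD₁ : dist (γ t₁) (c i₁) ≤ D := hγi₁ ▸ hmax ht₁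
  have hD₂ : dist (γ t₂) (c i₂) ≤ D := hγi₂ ▸ hmax ht₂
  have hidx : |(i₁ : ℝ) - i₂| ≤ 6 * τ * D := by
    have h₁₂ : dist (γ t₁) (γ t₂) ≤ 4 * D := by
      rw [hγ.isom ht₁ ht₂, abs_sub_comm, abs_of_nonneg (by linarith)]
      linarith [le_max_right 0 (t₀ - 2 * D), min_le_right L (t₀ + 2 * D)]
    have hcc : dist (c i₁) (c i₂) ≤ 6 * D := by
      linarith [dist_triangle4 (c i₁) (γ t₁) (γ t₂) (c i₂), dist_comm (c i₁) (γ t₁)]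
    calc |(i₁ : ℝ) - i₂| ≤ τ * dist (c i₁) (c i₂) := hlow i₁ hi₁ i₂ hi₂
      _ ≤ τ * (6 * D) := by gcongr
      _ = 6 * τ * D := by ring
  obtain ⟨k, hk, hkey⟩ := hX.exists_le_clog_of_chain_between hτ hstep
    (hγ.liesOnGeodesic_of_le ht₁.1 ht₁₀ ht₀₂ ht₂.2) hi₁ hi₂ hD₁ hD₂ hfar₁ hfar₂ (hS (γ t₀))
  exact ⟨k, hk.trans hidx, hkey⟩

theorem exists_dist_le_morseConstant (hX : IsDeltaHyperbolic X δ) (hτ : 0 ≤ τ) {c : ℕ → X}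
    {n : ℕ} (hstep : ∀ i < n, dist (c i) (c (i + 1)) ≤ τ)
    (hlow : ∀ i ≤ n, ∀ j ≤ n, |(i : ℝ) - j| ≤ τ * dist (c i) (c j))
    {p : X} (hp : LiesOnGeodesic p (c 0) (c n)) : ∃ i ≤ n, dist p (c i) ≤ morseConstant δ τ := by
  obtain ⟨γ, hγ, t, ht, rfl⟩ := hp
  set S := c '' Iic n
  obtain ⟨t₀, ht₀, hmax⟩ := isCompact_Icc.exists_isMaxOn ⟨t, ht⟩
    ((continuous_infDist_pt S).comp_continuousOn hγ.continuousOn)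
  obtain ⟨k, hk, hD⟩ := hX.exists_le_clog_of_isMaxOn hτ hstep hlow hγ ht₀ hmax
  obtain ⟨i, hi, hiS⟩ := exists_dist_eq_infDist_image_Iic c n (γ t)
  refine ⟨i, hi, hiS.symm ▸ (hmax ht).trans ?_⟩
  set D := infDist (γ t₀) S
  have hδ := hX.delta_nonneg
  have hlog : Real.log (k + 2 : ℕ) ≤ Real.log (6 * τ * D + 2) :=
    Real.log_le_log (by positivity) (by push_cast; linarith)
  have hclog := Nat.clog_lt_logb_add_one one_lt_two (show k + 2 ≠ 0 by omega)
  rw [Real.logb, Nat.cast_ofNat] at hclog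
  have hD' : D ≤ 2 * δ / Real.log 2 * Real.log (6 * τ * D + 2) + (2 * δ + τ) := by
    calc D ≤ 2 * δ * Nat.clog 2 (k + 2) + τ := hD
      _ ≤ 2 * δ * (Real.log (k + 2 : ℕ) / Real.log 2 + 1) + τ := by gcongr
      _ ≤ 2 * δ * (Real.log (6 * τ * D + 2) / Real.log 2 + 1) + τ := by gcongr
      _ = 2 * δ / Real.log 2 * Real.log (6 * τ * D + 2) + (2 * δ + τ) := by ring
  have := le_of_le_mul_log_add (by positivity) (by positivity) infDist_nonneg hD'
  rw [show 2 * (2 * δ / Real.log 2) * (6 * τ) = 24 * δ * τ / Real.log 2 by ring] at this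
  change D ≤ morseConstant δ τ
  unfold morseConstant
  linarith

theorem exists_dist_le_morseConstant_of_int (hX : IsDeltaHyperbolic X δ) (hτ : 0 < τ)
    {g : ℤ → X} (hg : ∀ m n : ℤ, (1 / τ) * |(m : ℝ) - n| ≤ dist (g m) (g n) ∧
      dist (g m) (g n) ≤ τ * |(m : ℝ) - n|)
    {a b : ℤ} {p : X} (hp : LiesOnGeodesic p (g a) (g b)) :
    ∃ i, dist p (g i) ≤ morseConstant δ τ := by
  wlog hab : a ≤ b generalizing a b
  · exact this hp.symm (le_of_not_ge hab)
  obtain ⟨n, rfl⟩ := Int.le.dest hab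
  have hstep : ∀ i : ℕ, dist (g (a + i)) (g (a + (i + 1 : ℕ))) ≤ τ := fun i => by
    simpa [add_assoc] using (hg (a + i) (a + i + 1)).2
  have hlow : ∀ i j : ℕ, |(i : ℝ) - j| ≤ τ * dist (g (a + i)) (g (a + j)) := fun i j => by
    have := (hg (a + i) (a + j)).1
    push_cast at this
    rwa [add_sub_add_left_eq_sub, one_div_mul_eq_div, div_le_iff₀' hτ] at this
  obtain ⟨i, -, hi⟩ := hX.exists_dist_le_morseConstant hτ.le (c := fun j : ℕ => g (a + j))
    (n := n) (fun i _ => hstep i) (fun i _ j _ => hlow i j) (by simpa using hp)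
  exact ⟨_, hi⟩

theorem dist_apply_gromovProduct_le (hX : IsDeltaHyperbolic X δ) {γ : ℝ → X} {x y : X}
    (hγ : IsGeodesicSegment γ x y) (z : X) :
    dist (γ (gromovProduct x y z)) z ≤ dist x z - gromovProduct x y z + δ := by
  obtain ⟨α, hα⟩ := hX.geodesic y z
  obtain ⟨β, hβ⟩ := hX.geodesic z x
  have hins := (hX.insize x y z α β γ hα hβ hγ).2.1
  have hβz := hβ.dist_source_apply ⟨gromovProduct_nonneg z x y, gromovProduct_le_dist z x y⟩
  have hsum : gromovProduct z x y = dist x z - gromovProduct x y z := by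
    unfold gromovProduct
    rw [dist_comm z y, dist_comm y x]
    ring
  linarith [dist_triangle (γ (gromovProduct x y z)) (β (gromovProduct z x y)) z,
    dist_comm (γ (gromovProduct x y z)) (β (gromovProduct z x y)),
    dist_comm z (β (gromovProduct z x y))]

end IsDeltaHyperbolic

/-- For a hyperbolic isometry `f` with quasi-geodesic orbit constant
`τ`, there is a constant `D ≥ 0` depending only on `δ` and `τ` such that for any
`z` and any point `x_z` of the orbit `A = {f^n x}` nearest to `z`,
`d(x,z) ≥ d(x,x_z) + d(x_z,z) − D`. -/
theorem nearest_orbit_point_almost_geodesic (δ τ : ℝ) (hτ : 1 ≤ τ) :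
    ∃ D : ℝ, 0 ≤ D ∧
      ∀ (Y : Type u) [MetricSpace Y], IsDeltaHyperbolic Y δ →
      ∀ f : Y ≃ᵢ Y, IsHyperbolicIsometry f →
      ∀ x : Y,
      (∀ m n : ℤ, (1 / τ) * |(m : ℝ) - (n : ℝ)| ≤ dist ((f ^ m) x) ((f ^ n) x) ∧
        dist ((f ^ m) x) ((f ^ n) x) ≤ τ * |(m : ℝ) - (n : ℝ)|) →
      ∀ z xz : Y,
        (∃ k : ℤ, xz = (f ^ k) x) →
        dist xz z = sInf {d : ℝ | ∃ k : ℤ, d = dist ((f ^ k) x) z} →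
        dist x xz + dist xz z - D ≤ dist x z := by
  refine ⟨max 0 (2 * (morseConstant δ τ + δ)), le_max_left _ _, ?_⟩
  rintro Y _ hY f - x hq z _ ⟨k, rfl⟩ hnearest
  have hmin : ∀ l : ℤ, dist ((f ^ k) x) z ≤ dist ((f ^ l) x) z := fun l =>
    hnearest ▸ csInf_le ⟨0, by rintro _ ⟨j, rfl⟩; exact dist_nonneg⟩ ⟨l, rfl⟩
  obtain ⟨γ, hγ⟩ := hY.geodesic ((f ^ k) x) x
  set q := γ (gromovProduct ((f ^ k) x) x z)
  have hqz : dist q z ≤ dist ((f ^ k) x) z - gromovProduct ((f ^ k) x) x z + δ :=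
    hY.dist_apply_gromovProduct_le hγ z
  have hq_on : LiesOnGeodesic q ((f ^ k) x) ((f ^ (0 : ℤ)) x) := by
    simpa using hγ.liesOnGeodesic ⟨gromovProduct_nonneg _ _ _, gromovProduct_le_dist _ _ _⟩
  obtain ⟨l, hl⟩ := hY.exists_dist_le_morseConstant_of_int (by linarith) hq hq_on
  have hG : gromovProduct ((f ^ k) x) x z ≤ morseConstant δ τ + δ := by
    linarith [hmin l, dist_triangle ((f ^ l) x) q z, dist_comm q ((f ^ l) x)]
  have hG_def : 2 * gromovProduct ((f ^ k) x) x z =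
      dist x ((f ^ k) x) + dist ((f ^ k) x) z - dist x z := by
    unfold gromovProduct; ring
  linarith [le_max_right 0 (2 * (morseConstant δ τ + δ))]
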